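/- arXiv:2603.24921 — 4 statements merged into one kernel-verified Lean document; each statement's English description precedes it below -/
import Mathlib

section
/- Let X be a topological space and let G be a locally profinite group equipped with a right Haar measure μ. Let f : X × G → X × G be a homeomorphism commuting with the projection to X, such that for every x ∈ X the induced homeomorphism f_x : G → G of the fiber over x is a group automorphism. For a topological group automorphism σ of G, let δ(σ) denote the unique positive real number satisfying μ(σ⁻¹(A)) = δ(σ) · μ(A) for every Borel set A ⊆ G. Then the function X → ℝ, x ↦ δ(f_x), is locally constant. -/
open MeasureTheory

/-- Let `X` be a topological space, `G` a locally profinite group with a right Haar measure `μ`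
(a nonzero regular Borel measure, finite on compacts, invariant under right translations).
Let `f : X × G → X × G` be a homeomorphism over `X` whose fiber maps `f_x : G → G` are group
automorphisms.  If `δ : X → ℝ` records, for each `x`, the (unique, positive) modular factor of
`f_x`, i.e. `μ (f_x ⁻¹' A) = δ x • μ A` for all Borel `A`, then `δ` is locally constant. -/
theorem modular_factor_of_fiberwise_automorphism_isLocallyConstant
    {X G : Type*} [TopologicalSpace X] [TopologicalSpace G]
    [Group G] [IsTopologicalGroup G]
    [LocallyCompactSpace G] [T2Space G] [TotallyDisconnectedSpace G]
    [MeasurableSpace G] [BorelSpace G]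
    (μ : Measure G) (hμ : μ ≠ 0) [Measure.Regular μ] [IsFiniteMeasureOnCompacts μ]
    [Measure.IsMulRightInvariant μ]
    (f : (X × G) ≃ₜ (X × G)) (hf : ∀ p : X × G, (f p).1 = p.1)
    (hhom : ∀ (x : X) (a b : G), (f (x, a * b)).2 = (f (x, a)).2 * (f (x, b)).2)
    (δ : X → ℝ) (hδpos : ∀ x, 0 < δ x)
    (hδ : ∀ (x : X) (A : Set G), MeasurableSet A →
      μ ((fun g => (f (x, g)).2) ⁻¹' A) = ENNReal.ofReal (δ x) * μ A) :
    IsLocallyConstant δ := by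
  classical
  -- basic facts about the fiber maps
  have hf1 : ∀ (x : X) (g : G), f (x, g) = (x, (f (x, g)).2) := by
    intro x g
    exact Prod.ext (hf (x, g)) rfl
  have hfsymm1 : ∀ (x : X) (g : G), f.symm (x, g) = ((x : X), (f.symm (x, g)).2) := by
    intro x g
    refine Prod.ext ?_ rfl
    have := hf (f.symm (x, g))
    rw [f.apply_symm_apply] at this
    exact this.symm
  have key : ∀ (x : X) (k : G), (f (x, (f.symm (x, k)).2)).2 = k := by
    intro x k
    have : f (x, (f.symm (x, k)).2) = (x, k) := by
      conv_lhs => rw [← hfsymm1 x k, f.apply_symm_apply]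
    rw [this]
  -- a nonempty compact open set K
  obtain ⟨s, hs_comp, hs_nhds⟩ := exists_compact_mem_nhds (1 : G)
  obtain ⟨K, hKclopen, hK1, hKs⟩ :=
    (loc_compact_Haus_tot_disc_of_zero_dim (H := G)).mem_nhds_iff.1 hs_nhds
  have hKcomp : IsCompact K := hs_comp.of_isClosed_subset hKclopen.1 hKs
  have hKopen : IsOpen K := hKclopen.2
  have hKmeas : MeasurableSet K := hKopen.measurableSet
  have hKpos : μ K ≠ 0 := by
    have hinv0 : μ.inv ≠ 0 := by
      intro h
      apply hμ
      rw [← μ.inv_inv, h]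
      simp [Measure.inv]
    have hopen : IsOpen K⁻¹ := hKopen.inv
    have hpos := (measure_pos_iff_nonempty_of_isMulLeftInvariant (μ := μ.inv) hinv0 hopen).2
      ⟨1⁻¹, Set.inv_mem_inv.2 hK1⟩
    rw [Measure.inv_apply, inv_inv] at hpos
    exact hpos.ne'
  have hKfin : μ K ≠ ⊤ := hKcomp.measure_lt_top.ne
  -- local constancy
  rw [IsLocallyConstant.iff_exists_open]
  intro x₀
  -- the fiber preimage of K at x₀
  set L : Set G := (fun g => (f (x₀, g)).2) ⁻¹' K with hLdef
  have hcont : ∀ x : X, Continuous fun g : G => (f (x, g)).2 :=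
    fun x => (continuous_snd.comp f.continuous).comp (Continuous.prodMk_right x)
  have hLopen : IsOpen L := hKopen.preimage (hcont x₀)
  have hLimg : L = (fun k => (f.symm (x₀, k)).2) '' K := by
    ext g
    constructor
    · intro hg
      refine ⟨(f (x₀, g)).2, hg, ?_⟩
      have : f.symm (x₀, (f (x₀, g)).2) = (x₀, g) := by
        rw [← hf1 x₀ g, f.symm_apply_apply]
      exact congrArg Prod.snd this
    · rintro ⟨k, hk, rfl⟩
      show (f (x₀, (f.symm (x₀, k)).2)).2 ∈ K
      rw [key x₀ k]; exact hk
  have hLcomp : IsCompact L := by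
    rw [hLimg]
    exact hKcomp.image ((continuous_snd.comp f.symm.continuous).comp (Continuous.prodMk_right x₀))
  -- tube lemma, forward direction
  have hS : IsOpen {p : X × G | (f p).2 ∈ K} :=
    hKopen.preimage (continuous_snd.comp f.continuous)
  have hsub : ({x₀} : Set X) ×ˢ L ⊆ {p : X × G | (f p).2 ∈ K} := by
    rintro ⟨x, g⟩ ⟨hx, hg⟩
    obtain rfl : x = x₀ := hx
    exact hg
  obtain ⟨U, V, hUopen, -, hx₀U, hLV, hUV⟩ :=
    generalized_tube_lemma isCompact_singleton hLcomp hS hsub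
  -- tube lemma, backward direction
  have hS' : IsOpen {p : X × G | (f.symm p).2 ∈ L} :=
    hLopen.preimage (continuous_snd.comp f.symm.continuous)
  have hsub' : ({x₀} : Set X) ×ˢ K ⊆ {p : X × G | (f.symm p).2 ∈ L} := by
    rintro ⟨x, k⟩ ⟨hx, hk⟩
    obtain rfl : x = x₀ := hx
    show (f (x, (f.symm (x, k)).2)).2 ∈ K
    rw [key x k]; exact hk
  obtain ⟨U', V', hU'open, -, hx₀U', hKV', hU'V'⟩ :=
    generalized_tube_lemma isCompact_singleton hKcomp hS' hsub'
  refine ⟨U ∩ U', hUopen.inter hU'open, ⟨hx₀U rfl, hx₀U' rfl⟩, ?_⟩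
  rintro x ⟨hxU, hxU'⟩
  -- for x in the neighborhood, the fiber preimage of K equals L
  have hpre : (fun g => (f (x, g)).2) ⁻¹' K = L := by
    apply Set.Subset.antisymm
    · intro g hg
      have hmem : (x, (f (x, g)).2) ∈ {p : X × G | (f.symm p).2 ∈ L} :=
        hU'V' ⟨hxU', hKV' hg⟩
      have : f.symm (x, (f (x, g)).2) = (x, g) := by
        rw [← hf1 x g, f.symm_apply_apply]
      simpa [this] using hmem
    · intro g hg
      exact hUV ⟨hxU, hLV hg⟩
  have h1 := hδ x K hKmeas
  have h2 := hδ x₀ K hKmeas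
  rw [hpre] at h1
  rw [← hLdef] at h2
  have : ENNReal.ofReal (δ x) = ENNReal.ofReal (δ x₀) :=
    (ENNReal.mul_left_inj hKpos hKfin).1 (h1.symm.trans h2)
  rw [ENNReal.ofReal_eq_ofReal_iff (hδpos x).le (hδpos x₀).le] at this
  exact this
end

section
/- Let X be a topological space, let G be a topological space, and let f : X × G → X × G be a homeomorphism commuting with the projection to X; for x ∈ X write f_x : G → G for the induced homeomorphism of the fiber over x. Then for every x ∈ X and every compact open subset K ⊆ G there exists an open neighborhood U of x such that f_u(K) = f_x(K) for all u ∈ U; equivalently, writing L = f_x(K), one has f(U × K) = U × L. -/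
/-- Let `X`, `G` be topological spaces and `f : X × G ≃ₜ X × G` a homeomorphism commuting with
the projection to `X`; write `f_u : G → G` for the fiber map over `u ∈ X`.  Then for every
`x ∈ X` and every compact open `K ⊆ G` there is an open neighborhood `U` of `x` such that
`f_u(K) = f_x(K)` for all `u ∈ U`; equivalently, with `L = f_x(K)`, one has
`f(U × K) = U × L`. -/
theorem exists_nhd_fiber_image_eq_of_homeomorph_over_base
    {X G : Type*} [TopologicalSpace X] [TopologicalSpace G]
    (f : (X × G) ≃ₜ (X × G)) (hf : ∀ p : X × G, (f p).1 = p.1)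
    (x : X) (K : Set G) (hKc : IsCompact K) (hKo : IsOpen K) :
    ∃ U : Set X, IsOpen U ∧ x ∈ U ∧
      (∀ u ∈ U, (fun g => (f (u, g)).2) '' K = (fun g => (f (x, g)).2) '' K) ∧
      f '' (U ×ˢ K) = U ×ˢ ((fun g => (f (x, g)).2) '' K) := by
  set fib : X → G → G := fun u g => (f (u, g)).2 with hfib
  set L : Set G := fib x '' K with hL
  -- f.symm also commutes with the projection
  have hf' : ∀ p : X × G, (f.symm p).1 = p.1 := by
    intro p
    have := hf (f.symm p)
    rw [f.apply_symm_apply] at this; exact this.symm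
  have hfe : ∀ u g, f (u, g) = (u, fib u g) := fun u g => Prod.ext (hf _) rfl
  have hfe' : ∀ u g, f.symm (u, g) = (u, (f.symm (u, g)).2) :=
    fun u g => Prod.ext (hf' _) rfl
  -- L is the preimage of K under the continuous inverse fiber map, hence open
  have hLeq : L = (fun g => (f.symm (x, g)).2) ⁻¹' K := by
    ext g
    constructor
    · rintro ⟨k, hk, rfl⟩
      have : f.symm (x, fib x k) = (x, k) := by rw [← hfe, f.symm_apply_apply]
      simpa [this] using hk
    · intro hg
      refine ⟨(f.symm (x, g)).2, hg, ?_⟩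
      have : f (x, (f.symm (x, g)).2) = (x, g) := by
        rw [← hfe' x g, f.apply_symm_apply]
      simp [hfib, this]
  have hLo : IsOpen L := by
    rw [hLeq]
    exact hKo.preimage (by fun_prop)
  have hLc : IsCompact L := hKc.image (by fun_prop)
  -- the two eventual conditions
  have h1 : ∀ᶠ u in nhds x, ∀ k ∈ K, fib u k ∈ L := by
    apply hKc.eventually_forall_of_forall_eventually
    intro k hk
    have hcont : Continuous fun z : X × G => (f z).2 := by fun_prop
    have : fib x k ∈ L := ⟨k, hk, rfl⟩
    exact hcont.continuousAt.eventually_mem (hLo.mem_nhds this)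
  have h2 : ∀ᶠ u in nhds x, ∀ l ∈ L, (f.symm (u, l)).2 ∈ K := by
    apply hLc.eventually_forall_of_forall_eventually
    intro l hl
    have hcont : Continuous fun z : X × G => (f.symm z).2 := by fun_prop
    have hx : (f.symm (x, l)).2 ∈ K := by have := hLeq ▸ hl; exact this
    exact hcont.continuousAt.eventually_mem (hKo.mem_nhds hx)
  set U : Set X :=
    interior {u | (∀ k ∈ K, fib u k ∈ L) ∧ ∀ l ∈ L, (f.symm (u, l)).2 ∈ K} with hU
  have hxU : x ∈ U := by
    rw [hU, mem_interior_iff_mem_nhds]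
    exact h1.and h2
  have hmain : ∀ u ∈ U, fib u '' K = L := by
    intro u hu
    obtain ⟨hu1, hu2⟩ := interior_subset hu
    apply Set.Subset.antisymm
    · rintro _ ⟨k, hk, rfl⟩
      exact hu1 k hk
    · intro l hl
      refine ⟨(f.symm (u, l)).2, hu2 l hl, ?_⟩
      have : f (u, (f.symm (u, l)).2) = (u, l) := by
        rw [← hfe' u l, f.apply_symm_apply]
      simp [hfib, this]
  refine ⟨U, isOpen_interior, hxU, hmain, ?_⟩
  ext ⟨a, b⟩
  constructor
  · rintro ⟨⟨u, k⟩, ⟨hu, hk⟩, heq⟩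
    rw [hfe] at heq
    rcases Prod.ext_iff.mp heq with ⟨h₁, h₂⟩
    dsimp at h₁ h₂
    subst h₁
    refine ⟨hu, ?_⟩
    rw [← hmain u hu]
    exact ⟨k, hk, h₂⟩
  · rintro ⟨ha, hb⟩
    rw [← hmain a ha] at hb
    obtain ⟨k, hk, hkb⟩ := hb
    exact ⟨(a, k), ⟨ha, hk⟩, by rw [hfe]; exact congrArg _ hkb⟩
end

section
/- Let G be a locally profinite group with a right Haar measure μ. Then: (i) for every topological group automorphism σ of G there is a unique positive real number δ(σ) such that μ(σ⁻¹(A)) = δ(σ) · μ(A) for every Borel set A ⊆ G; (ii) this number δ(σ) is a positive rational number; and (iii) the assignment σ ↦ δ(σ) is a group homomorphism from the group of topological group automorphisms of G to the multiplicative group of positive reals, i.e. δ(σ ∘ τ) = δ(σ) · δ(τ) and δ(id) = 1. -/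
open MeasureTheory Set
open scoped ENNReal NNReal Pointwise

section AuxLemmas

variable {G : Type*} [Group G] [TopologicalSpace G] [IsTopologicalGroup G]

/-- A compact open subset `W` of a topological group absorbs a neighborhood of `1`
on the right. -/
lemma aux_exist_mul_closure_nhd {W : Set G} (Wcomp : IsCompact W) (Wopen : IsOpen W) :
    ∃ T ∈ nhds (1 : G), W * T ⊆ W := by
  apply Wcomp.induction_on (p := fun S ↦ ∃ T ∈ nhds (1 : G), S * T ⊆ W)
    ⟨Set.univ, by simp only [Filter.univ_mem, Set.empty_mul, Set.empty_subset, and_self]⟩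
    (fun _ _ huv ⟨T, hT, mem⟩ ↦ ⟨T, hT, (Set.mul_subset_mul_right huv).trans mem⟩)
    (fun U V ⟨T₁, hT₁, mem1⟩ ⟨T₂, hT₂, mem2⟩ ↦ ⟨T₁ ∩ T₂, Filter.inter_mem hT₁ hT₂, by
      rw [Set.union_mul]
      exact Set.union_subset ((Set.mul_subset_mul_left Set.inter_subset_left).trans mem1)
        ((Set.mul_subset_mul_left Set.inter_subset_right).trans mem2)⟩)
  intro x memW
  have : (x, 1) ∈ (fun p : G × G ↦ p.1 * p.2) ⁻¹' W := by simp [memW]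
  rcases isOpen_prod_iff.mp (continuous_mul.isOpen_preimage W Wopen) x 1 this with
    ⟨U, V, Uopen, Vopen, xmemU, onememV, prodsub⟩
  have h6 : U * V ⊆ W := Set.mul_subset_iff.mpr (fun _ hx _ hy ↦ prodsub (Set.mk_mem_prod hx hy))
  exact ⟨U ∩ W, ⟨U, Uopen.mem_nhds xmemU, W, fun _ a ↦ a, rfl⟩,
    V, Vopen.mem_nhds onememV, fun _ a ↦ h6 ((Set.mul_subset_mul_right Set.inter_subset_left) a)⟩

/-- **Van Dantzig's theorem**: a locally compact, Hausdorff, totally disconnected group has a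
compact open subgroup. -/
lemma aux_vanDantzig [LocallyCompactSpace G] [T2Space G] [TotallyDisconnectedSpace G] :
    ∃ K : Subgroup G, IsOpen (K : Set G) ∧ IsCompact (K : Set G) := by
  obtain ⟨s, hs_comp, hs_nhds⟩ := exists_compact_mem_nhds (1 : G)
  have h1 : (1 : G) ∈ interior s := mem_interior_iff_mem_nhds.mpr hs_nhds
  obtain ⟨W, hWclopen, hW1, hWsub⟩ :=
    loc_compact_Haus_tot_disc_of_zero_dim.exists_subset_of_mem_open h1 isOpen_interior
  replace hWclopen : IsClopen W := hWclopen
  have Wcomp : IsCompact W :=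
    hs_comp.of_isClosed_subset hWclopen.1 (hWsub.trans interior_subset)
  -- find an open symmetric neighborhood V of 1 with W * V ⊆ W
  obtain ⟨S, Smemnhds, mulclose⟩ := aux_exist_mul_closure_nhd Wcomp hWclopen.2
  rcases mem_nhds_iff.mp Smemnhds with ⟨U, UsubS, Uopen, onememU⟩
  set V : Set G := U ∩ U⁻¹ with hV
  have Vnhd : (1 : G) ∈ V := ⟨onememU, by simpa using onememU⟩
  have Vinv : V⁻¹ = V := by simp [hV, Set.inter_comm]
  have Vopen : IsOpen V := Uopen.inter Uopen.inv
  have Vmul : W * V ⊆ W := fun a ha ↦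
    mulclose (Set.mul_subset_mul_left UsubS (Set.mul_subset_mul_left Set.inter_subset_left ha))
  -- the subgroup generated by V is open and contained in W
  let S' : Subgroup G :=
    { carrier := ⋃ n, V ^ (n + 1)
      mul_mem' := fun ha hb ↦ by
        rcases Set.mem_iUnion.mp ha with ⟨k, hk⟩
        rcases Set.mem_iUnion.mp hb with ⟨l, hl⟩
        apply Set.mem_iUnion.mpr
        exact ⟨k + 1 + l, by rw [add_assoc, pow_add]; exact Set.mul_mem_mul hk hl⟩
      one_mem' := Set.mem_iUnion.mpr ⟨0, by simpa using Vnhd⟩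
      inv_mem' := fun ha ↦ by
        rcases Set.mem_iUnion.mp ha with ⟨k, hk⟩
        apply Set.mem_iUnion.mpr
        refine ⟨k, ?_⟩
        rw [← Vinv]
        simpa only [inv_pow, Set.mem_inv, inv_inv] using hk }
  have hopen : IsOpen (S' : Set G) := by
    refine isOpen_iUnion (fun n ↦ ?_)
    rw [pow_succ]
    exact Vopen.mul_left
  have mulVpow : ∀ n : ℕ, W * V ^ (n + 1) ⊆ W := by
    intro n
    induction' n with n ih
    · simpa using Vmul
    · rw [pow_succ, ← mul_assoc]
      exact (Set.mul_subset_mul_right ih).trans Vmul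
  have hsub : (S' : Set G) ⊆ W := by
    refine Set.iUnion_subset fun i x hx ↦ mulVpow i ?_
    exact ⟨1, hW1, x, hx, one_mul x⟩
  have hclosed : IsClosed (S' : Set G) := S'.isClosed_of_isOpen hopen
  exact ⟨S', hopen, Wcomp.of_isClosed_subset hclosed hsub⟩

variable [MeasurableSpace G] [BorelSpace G]

/-- For a left-invariant measure, an open subgroup `L` of a compact subgroup `K` satisfies
`ν K = n * ν L` for some positive integer `n` (the index of `L` in `K`). -/
lemma aux_index_left (ν : Measure G) [Measure.IsMulLeftInvariant ν]
    (L K : Subgroup G) (hLK : L ≤ K) (hLopen : IsOpen (L : Set G))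
    (hKcomp : IsCompact (K : Set G)) :
    ∃ n : ℕ, 0 < n ∧ ν (K : Set G) = n * ν (L : Set G) := by
  haveI : CompactSpace ↥K := isCompact_iff_compactSpace.mp hKcomp
  set L' : Subgroup ↥K := L.subgroupOf K with hL'
  have hL'open : IsOpen (L' : Set ↥K) := by
    have : (L' : Set ↥K) = (Subtype.val : ↥K → G) ⁻¹' (L : Set G) := rfl
    rw [this]
    exact hLopen.preimage continuous_subtype_val
  haveI : Finite (↥K ⧸ L') := Subgroup.quotient_finite_of_isOpen L' hL'open
  haveI : Fintype (↥K ⧸ L') := Fintype.ofFinite _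
  set g : (↥K ⧸ L') → G := fun c => ((Quotient.out c : ↥K) : G) with hg
  set f : (↥K ⧸ L') → Set G := fun c => (fun x => (g c)⁻¹ * x) ⁻¹' (L : Set G) with hf
  have hmem : ∀ c x, x ∈ f c ↔ (g c)⁻¹ * x ∈ L := fun c x => Iff.rfl
  have hmeas : ∀ c, MeasurableSet (f c) :=
    fun c => (hLopen.preimage (continuous_mul_left _)).measurableSet
  have hν : ∀ c, ν (f c) = ν (L : Set G) := fun c => measure_preimage_mul ν _ _
  have hcover : ⋃ c, f c = (K : Set G) := by
    ext x
    constructor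
    · rintro ⟨_, ⟨c, rfl⟩, hx⟩
      have h1 : (g c)⁻¹ * x ∈ L := hx
      have h2 : g c ∈ K := (Quotient.out c : ↥K).2
      have := mul_mem h2 (hLK h1)
      simpa using this
    · intro hx
      refine Set.mem_iUnion.mpr ⟨QuotientGroup.mk (⟨x, hx⟩ : ↥K), ?_⟩
      obtain ⟨h, hh⟩ := QuotientGroup.mk_out_eq_mul L' (⟨x, hx⟩ : ↥K)
      rw [hmem]
      have : g (QuotientGroup.mk (⟨x, hx⟩ : ↥K)) = x * ((h : ↥K) : G) := by
        rw [hg]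
        simp only [hh]
        rfl
      rw [this]
      have hhL : ((h : ↥K) : G) ∈ L := (Subgroup.mem_subgroupOf).mp h.2
      have : (x * ((h : ↥K) : G))⁻¹ * x = ((h : ↥K) : G)⁻¹ := by group
      rw [this]
      exact L.inv_mem hhL
  have hdisj : Pairwise (Function.onFun Disjoint f) := by
    intro c c' hne
    rw [Function.onFun, Set.disjoint_left]
    intro x hxc hxc'
    apply hne
    have h1 : (g c)⁻¹ * x ∈ L := hxc
    have h2 : (g c')⁻¹ * x ∈ L := hxc'
    have h3 : (g c)⁻¹ * g c' ∈ L := by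
      have := mul_mem h1 (L.inv_mem h2)
      have heq : (g c)⁻¹ * x * ((g c')⁻¹ * x)⁻¹ = (g c)⁻¹ * g c' := by group
      rwa [heq] at this
    have h4 : (Quotient.out c)⁻¹ * (Quotient.out c') ∈ L' :=
      Subgroup.mem_subgroupOf.mpr h3
    have h5 : (QuotientGroup.mk (Quotient.out c) : ↥K ⧸ L') = QuotientGroup.mk (Quotient.out c') :=
      QuotientGroup.eq.mpr h4
    rwa [QuotientGroup.out_eq', QuotientGroup.out_eq'] at h5
  refine ⟨Fintype.card (↥K ⧸ L'), Fintype.card_pos, ?_⟩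
  calc ν (K : Set G) = ν (⋃ c, f c) := by rw [hcover]
    _ = ∑' c, ν (f c) := measure_iUnion hdisj hmeas
    _ = (Fintype.card (↥K ⧸ L') : ℝ≥0∞) * ν (L : Set G) := by
        rw [tsum_eq_sum (s := Finset.univ) (by simp)]
        simp_rw [hν]
        rw [Finset.sum_const, Finset.card_univ, nsmul_eq_mul]

/-- Right-invariant version of `aux_index_left`. -/
lemma aux_index_right (μ : Measure G) [Measure.IsMulRightInvariant μ]
    (L K : Subgroup G) (hLK : L ≤ K) (hLopen : IsOpen (L : Set G))
    (hKcomp : IsCompact (K : Set G)) :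
    ∃ n : ℕ, 0 < n ∧ μ (K : Set G) = n * μ (L : Set G) := by
  have hsetinv : ∀ H : Subgroup G, ((H : Set G))⁻¹ = (H : Set G) := by
    intro H
    ext x
    simp [Set.mem_inv, H.inv_mem_iff]
  obtain ⟨n, hn, h⟩ := aux_index_left μ.inv L K hLK hLopen hKcomp
  refine ⟨n, hn, ?_⟩
  rwa [Measure.inv_apply, Measure.inv_apply, hsetinv, hsetinv] at h

variable [LocallyCompactSpace G] [T2Space G] [TotallyDisconnectedSpace G]

/-- The modular factor of a topological automorphism of a locally profinite group with respect to
a right Haar measure is a positive rational number. -/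
lemma aux_modular (μ : Measure G) (hμ : μ ≠ 0) [Measure.Regular μ]
    [IsFiniteMeasureOnCompacts μ] [Measure.IsMulRightInvariant μ]
    (σ : G ≃* G) (hσ : Continuous σ) (hσs : Continuous σ.symm) :
    ∃ q : ℚ, 0 < q ∧ ∀ A : Set G, MeasurableSet A →
      μ (⇑σ ⁻¹' A) = ENNReal.ofReal (q : ℝ) * μ A := by
  haveI : NeZero μ := ⟨hμ⟩
  set e : G ≃ₜ G := ⟨σ.toEquiv, hσ, hσs⟩ with he
  set ν : Measure G := μ.map e with hν
  have hmap : ∀ A : Set G, MeasurableSet A → ν A = μ (⇑σ ⁻¹' A) := by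
    intro A hA
    rw [hν, Measure.map_apply e.measurable hA]
    rfl
  haveI : Measure.Regular ν := Measure.Regular.map e
  haveI : IsFiniteMeasureOnCompacts ν := Measure.IsFiniteMeasureOnCompacts.map μ e
  haveI : Measure.IsMulRightInvariant ν := by
    refine ⟨fun g => ?_⟩
    rw [hν, Measure.map_map (measurable_mul_const g) e.measurable]
    have hcomp : ((· * g) ∘ ⇑e) = ⇑e ∘ (· * σ.symm g) := by
      funext x
      show σ x * g = σ (x * σ.symm g)
      rw [map_mul, MulEquiv.apply_symm_apply]
    rw [hcomp, ← Measure.map_map e.measurable (measurable_mul_const _),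
      map_mul_right_eq_self μ _]
  haveI : NeZero ν := by
    refine ⟨fun h0 => hμ ?_⟩
    have : ν Set.univ = μ Set.univ := by
      rw [hν, Measure.map_apply e.measurable MeasurableSet.univ, Set.preimage_univ]
    rw [h0] at this
    simp only [Measure.coe_zero, Pi.zero_apply] at this
    exact Measure.measure_univ_eq_zero.mp this.symm
  haveI : NeZero μ.inv := by
    refine ⟨fun h0 => hμ ?_⟩
    have := congrArg Measure.inv h0
    rw [Measure.inv_inv] at this
    simpa [Measure.inv, Measure.map_zero] using this
  haveI : NeZero ν.inv := by
    refine ⟨fun h0 => (NeZero.ne ν) ?_⟩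
    have := congrArg Measure.inv h0
    rw [Measure.inv_inv] at this
    simpa [Measure.inv, Measure.map_zero] using this
  haveI : Measure.IsHaarMeasure μ.inv :=
    { toIsFiniteMeasureOnCompacts := inferInstance
      toIsMulLeftInvariant := inferInstance
      toIsOpenPosMeasure := inferInstance }
  set c : ℝ≥0 := Measure.haarScalarFactor ν.inv μ.inv with hc
  have huniq : ν.inv = c • μ.inv := Measure.isMulLeftInvariant_eq_smul_of_regular ν.inv μ.inv
  have hsmul : ∀ A : Set G, ν A = (c : ℝ≥0∞) * μ A := by
    intro A
    have h1 : ν.inv A⁻¹ = (c • μ.inv) A⁻¹ := by rw [huniq]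
    rw [Measure.inv_apply, inv_inv, Measure.smul_apply, Measure.inv_apply, inv_inv] at h1
    simpa [ENNReal.smul_def] using h1
  -- compact open subgroup
  obtain ⟨K₀, hK₀open, hK₀comp⟩ := aux_vanDantzig (G := G)
  have hKmeas : MeasurableSet (K₀ : Set G) := hK₀open.measurableSet
  have hsetinv : ∀ H : Subgroup G, ((H : Set G))⁻¹ = (H : Set G) := by
    intro H; ext x; simp [Set.mem_inv, H.inv_mem_iff]
  have hpos : ∀ S : Subgroup G, IsOpen (S : Set G) → 0 < μ (S : Set G) := by
    intro S hS
    have : μ (S : Set G) = μ.inv (S : Set G) := by rw [Measure.inv_apply, hsetinv]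
    rw [this]
    exact hS.measure_pos μ.inv ⟨1, S.one_mem⟩
  set H : Subgroup G := K₀.comap σ.toMonoidHom with hH
  have hHset : (H : Set G) = ⇑σ ⁻¹' (K₀ : Set G) := rfl
  have hHopen : IsOpen (H : Set G) := by rw [hHset]; exact hK₀open.preimage hσ
  have hHcomp : IsCompact (H : Set G) := by
    rw [hHset]
    have himg : (⇑σ ⁻¹' (K₀ : Set G)) = ⇑σ.symm '' (K₀ : Set G) := by
      ext x
      constructor
      · intro hx
        exact ⟨σ x, hx, σ.symm_apply_apply x⟩
      · rintro ⟨y, hy, rfl⟩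
        simpa [MulEquiv.apply_symm_apply] using hy
    rw [himg]
    exact hK₀comp.image hσs
  set L : Subgroup G := H ⊓ K₀ with hL
  have hLopen : IsOpen (L : Set G) := by
    have : (L : Set G) = (H : Set G) ∩ (K₀ : Set G) := rfl
    rw [this]
    exact hHopen.inter hK₀open
  have hLpos : 0 < μ (L : Set G) := hpos L hLopen
  have hLfin : μ (L : Set G) < ∞ :=
    lt_of_le_of_lt (measure_mono (SetLike.coe_subset_coe.mpr inf_le_right)) hK₀comp.measure_lt_top
  obtain ⟨n₁, hn₁, e₁⟩ := aux_index_right μ L H inf_le_left hLopen hHcomp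
  obtain ⟨n₂, hn₂, e₂⟩ := aux_index_right μ L K₀ inf_le_right hLopen hK₀comp
  refine ⟨(n₁ : ℚ) / n₂, by positivity, ?_⟩
  have hq : ENNReal.ofReal (((n₁ : ℚ) / n₂ : ℚ) : ℝ) = (n₁ : ℝ≥0∞) / n₂ := by
    push_cast
    rw [ENNReal.ofReal_div_of_pos (by exact_mod_cast hn₂)]
    simp
  have hcK : (c : ℝ≥0∞) * μ (K₀ : Set G) = μ (H : Set G) := by
    rw [hHset, ← hsmul, hmap _ hKmeas]
  have key : (c : ℝ≥0∞) = (n₁ : ℝ≥0∞) / n₂ := by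
    have ht0 : μ (L : Set G) ≠ 0 := hLpos.ne'
    have htt : μ (L : Set G) ≠ ∞ := hLfin.ne
    have h2 : (c : ℝ≥0∞) * ((n₂ : ℝ≥0∞) * μ (L : Set G)) = (n₁ : ℝ≥0∞) * μ (L : Set G) := by
      rw [← e₂, ← e₁, hcK]
    have h3 : ((n₁ : ℝ≥0∞) / n₂) * ((n₂ : ℝ≥0∞) * μ (L : Set G))
        = (n₁ : ℝ≥0∞) * μ (L : Set G) := by
      rw [← mul_assoc,
        ENNReal.div_mul_cancel (by exact_mod_cast hn₂.ne') (ENNReal.natCast_ne_top _)]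
    have ht : (n₂ : ℝ≥0∞) * μ (L : Set G) ≠ 0 :=
      mul_ne_zero (by exact_mod_cast hn₂.ne') ht0
    have ht' : (n₂ : ℝ≥0∞) * μ (L : Set G) ≠ ∞ :=
      ENNReal.mul_ne_top (ENNReal.natCast_ne_top _) htt
    exact (ENNReal.mul_left_inj ht ht').mp (h2.trans h3.symm)
  intro A hA
  rw [← hmap A hA, hsmul A, key, hq]

end AuxLemmas

/-- Let `G` be a locally profinite group with a right Haar measure `μ` (a nonzero regular Borel
measure, finite on compacts, invariant under right translations).  Then:
(i) every topological group automorphism `σ` of `G` admits a unique positive real modular factor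
`δ(σ)` with `μ (σ ⁻¹' A) = δ(σ) • μ A` for all Borel `A`;
(ii) this modular factor is a (positive) rational number;
(iii) the assignment `σ ↦ δ(σ)` is multiplicative: `δ(σ ∘ τ) = δ(σ) * δ(τ)` and `δ(id) = 1`. -/
theorem modular_character_of_locally_profinite_group
    {G : Type*} [Group G] [TopologicalSpace G] [IsTopologicalGroup G]
    [LocallyCompactSpace G] [T2Space G] [TotallyDisconnectedSpace G]
    [MeasurableSpace G] [BorelSpace G]
    (μ : Measure G) (hμ : μ ≠ 0) [Measure.Regular μ] [IsFiniteMeasureOnCompacts μ]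
    [Measure.IsMulRightInvariant μ] :
    (∀ σ : G ≃* G, Continuous σ → Continuous σ.symm →
      ∃! d : ℝ, 0 < d ∧ ∀ A : Set G, MeasurableSet A →
        μ (⇑σ ⁻¹' A) = ENNReal.ofReal d * μ A) ∧
    (∀ σ : G ≃* G, Continuous σ → Continuous σ.symm → ∀ d : ℝ,
      (0 < d ∧ ∀ A : Set G, MeasurableSet A → μ (⇑σ ⁻¹' A) = ENNReal.ofReal d * μ A) →
      ∃ q : ℚ, 0 < q ∧ d = (q : ℝ)) ∧
    (∀ σ τ : G ≃* G, Continuous σ → Continuous σ.symm → Continuous τ → Continuous τ.symm →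
      ∀ dσ dτ dστ : ℝ,
      (0 < dσ ∧ ∀ A : Set G, MeasurableSet A → μ (⇑σ ⁻¹' A) = ENNReal.ofReal dσ * μ A) →
      (0 < dτ ∧ ∀ A : Set G, MeasurableSet A → μ (⇑τ ⁻¹' A) = ENNReal.ofReal dτ * μ A) →
      (0 < dστ ∧ ∀ A : Set G, MeasurableSet A →
        μ ((fun g => σ (τ g)) ⁻¹' A) = ENNReal.ofReal dστ * μ A) →
      dστ = dσ * dτ) ∧
    (∀ d : ℝ, (0 < d ∧ ∀ A : Set G, MeasurableSet A →
      μ ((id : G → G) ⁻¹' A) = ENNReal.ofReal d * μ A) → d = 1) := by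
  haveI : NeZero μ := ⟨hμ⟩
  haveI : NeZero μ.inv := by
    refine ⟨fun h0 => hμ ?_⟩
    have := congrArg Measure.inv h0
    rw [Measure.inv_inv] at this
    simpa [Measure.inv, Measure.map_zero] using this
  obtain ⟨K₀, hK₀open, hK₀comp⟩ := aux_vanDantzig (G := G)
  have hKmeas : MeasurableSet (K₀ : Set G) := hK₀open.measurableSet
  have hsetinv : ((K₀ : Set G))⁻¹ = (K₀ : Set G) := by
    ext x; simp [Set.mem_inv, K₀.inv_mem_iff]
  have hKpos : 0 < μ (K₀ : Set G) := by
    have : μ (K₀ : Set G) = μ.inv (K₀ : Set G) := by rw [Measure.inv_apply, hsetinv]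
    rw [this]
    exact hK₀open.measure_pos μ.inv ⟨1, K₀.one_mem⟩
  have hKfin : μ (K₀ : Set G) ≠ ∞ := hK₀comp.measure_lt_top.ne
  have cancel : ∀ a b : ℝ≥0∞, a * μ (K₀ : Set G) = b * μ (K₀ : Set G) → a = b :=
    fun a b h => (ENNReal.mul_left_inj hKpos.ne' hKfin).mp h
  refine ⟨?_, ?_, ?_, ?_⟩
  · -- (i) existence and uniqueness
    intro σ hσ hσs
    obtain ⟨q, hq, hprop⟩ := aux_modular μ hμ σ hσ hσs
    refine ⟨(q : ℝ), ⟨by exact_mod_cast hq, hprop⟩, ?_⟩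
    rintro d ⟨hd, hdprop⟩
    have h := cancel _ _ ((hdprop _ hKmeas).symm.trans (hprop _ hKmeas))
    exact (ENNReal.ofReal_eq_ofReal_iff hd.le (by positivity)).mp h
  · -- (ii) rationality
    rintro σ hσ hσs d ⟨hd, hdprop⟩
    obtain ⟨q, hq, hprop⟩ := aux_modular μ hμ σ hσ hσs
    refine ⟨q, hq, ?_⟩
    have h := cancel _ _ ((hdprop _ hKmeas).symm.trans (hprop _ hKmeas))
    exact (ENNReal.ofReal_eq_ofReal_iff hd.le (by positivity)).mp h
  · -- (iii) multiplicativity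
    rintro σ τ hσ hσs hτ hτs dσ dτ dστ ⟨hdσ, hσp⟩ ⟨hdτ, hτp⟩ ⟨hdστ, hστp⟩
    have hmeasσK : MeasurableSet (⇑σ ⁻¹' (K₀ : Set G)) := hKmeas.preimage hσ.measurable
    have h1 := hστp _ hKmeas
    have h2 : ((fun g => σ (τ g)) ⁻¹' (K₀ : Set G)) = ⇑τ ⁻¹' (⇑σ ⁻¹' (K₀ : Set G)) := rfl
    rw [h2, hτp _ hmeasσK, hσp _ hKmeas] at h1
    -- h1 : ofReal dτ * (ofReal dσ * μ K₀) = ofReal dστ * μ K₀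
    have h3 : ENNReal.ofReal (dσ * dτ) * μ (K₀ : Set G)
        = ENNReal.ofReal dστ * μ (K₀ : Set G) := by
      rw [ENNReal.ofReal_mul hdσ.le, ← h1]
      ring
    have h4 := cancel _ _ h3
    have := (ENNReal.ofReal_eq_ofReal_iff (by positivity) hdστ.le).mp h4
    exact this.symm
  · -- (iv) normalization
    rintro d ⟨hd, hdprop⟩
    have h1 := hdprop _ hKmeas
    rw [Set.preimage_id] at h1
    have h2 : ENNReal.ofReal d * μ (K₀ : Set G) = ENNReal.ofReal 1 * μ (K₀ : Set G) := by
      rw [← h1, ENNReal.ofReal_one, one_mul]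
    exact (ENNReal.ofReal_eq_ofReal_iff hd.le one_pos.le).mp (cancel _ _ h2)
end

section
/- Let A, N, Q, R be groups. Suppose Q acts on N by group automorphisms and R acts on A by group automorphisms, and let π : N → Q and ρ : R → Q be group homomorphisms such that π(n) · m = n m n⁻¹ for all n, m ∈ N and π(q · n) = q π(n) q⁻¹ for all q ∈ Q, n ∈ N. Let R act on A × N by r · (a, n) = (r · a, ρ(r) · n), giving a semidirect product (A × N) ⋊ R, and let Q act diagonally on N × N, giving a semidirect product (N × N) ⋊ Q. Then: (i) the maps (A × N) ⋊ R → Q, ((a, n), r) ↦ π(n) ρ(r), and (N × N) ⋊ Q → Q, ((x, y), z) ↦ π(x) z, are group homomorphisms, so the fiber product Ξ = {(((a, n), r), ((x, y), z)) : π(n) ρ(r) = π(x) z} is a subgroup of ((A × N) ⋊ R) × ((N × N) ⋊ Q); and (ii) the map Ξ → (A × N) ⋊ R sending (((a, n), r), ((x, y), z)) to ((a, y x⁻¹ n), r) is a group homomorphism. -/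
section

variable {A N Q R : Type*} [Group A] [Group N] [Group Q] [Group R]
  [MulDistribMulAction Q N] [MulDistribMulAction R A]

/-- The action of `R` on `A × N` given by `r • (a, n) = (r • a, ρ r • n)`, as a homomorphism
into the automorphism group of `A × N`. -/
def prodMulAut (ρ : R →* Q) : R →* MulAut (A × N) where
  toFun r :=
    { toFun := fun p => (r • p.1, ρ r • p.2)
      invFun := fun p => (r⁻¹ • p.1, (ρ r)⁻¹ • p.2)
      left_inv := fun p => by simp
      right_inv := fun p => by simp
      map_mul' := fun p q => by simp [Prod.ext_iff, smul_mul'] }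
  map_one' := MulEquiv.ext fun p => by simp
  map_mul' r s := MulEquiv.ext fun p => by simp [MulAut.mul_apply, mul_smul]

/-- The diagonal action of `Q` on `N × N`, as a homomorphism into the automorphism group of
`N × N`. -/
def diagMulAut : Q →* MulAut (N × N) where
  toFun q :=
    { toFun := fun p => (q • p.1, q • p.2)
      invFun := fun p => (q⁻¹ • p.1, q⁻¹ • p.2)
      left_inv := fun p => by simp
      right_inv := fun p => by simp
      map_mul' := fun p p' => by simp [Prod.ext_iff, smul_mul'] }
  map_one' := MulEquiv.ext fun p => by simp
  map_mul' q q' := MulEquiv.ext fun p => by simp [MulAut.mul_apply, mul_smul]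

/-- The map `(A × N) ⋊ R → Q`, `((a, n), r) ↦ π n * ρ r`. -/
def mapOne (π : N →* Q) (ρ : R →* Q) : ((A × N) ⋊[prodMulAut ρ] R) → Q :=
  fun g => π g.left.2 * ρ g.right

/-- The map `(N × N) ⋊ Q → Q`, `((x, y), z) ↦ π x * z`. -/
def mapTwo (π : N →* Q) : ((N × N) ⋊[diagMulAut] Q) → Q :=
  fun g => π g.left.1 * g.right

/-- The map `(((a, n), r), ((x, y), z)) ↦ ((a, y x⁻¹ n), r)`. -/
def xiMap (ρ : R →* Q) :
    (((A × N) ⋊[prodMulAut ρ] R) × ((N × N) ⋊[diagMulAut] Q)) →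
      ((A × N) ⋊[prodMulAut ρ] R) :=
  fun w => ⟨(w.1.left.1, w.2.left.2 * (w.2.left.1)⁻¹ * w.1.left.2), w.1.right⟩

/-- Let `A, N, Q, R` be groups, with `Q` acting on `N` and `R` acting on `A` by automorphisms,
and let `π : N →* Q`, `ρ : R →* Q` be homomorphisms such that `π n` acts as conjugation by `n`
and `π` is equivariant for the conjugation action of `Q`.  Then:
(i) `((a, n), r) ↦ π n * ρ r` and `((x, y), z) ↦ π x * z` are group homomorphisms on
`(A × N) ⋊ R` and `(N × N) ⋊ Q` respectively, so their fiber product `Ξ` is a subgroup of the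
product; and
(ii) the map `Ξ → (A × N) ⋊ R`, `(((a, n), r), ((x, y), z)) ↦ ((a, y x⁻¹ n), r)` is a group
homomorphism. -/
theorem xiMap_isGroupHom (π : N →* Q) (ρ : R →* Q)
    (hconj : ∀ n m : N, π n • m = n * m * n⁻¹)
    (hequiv : ∀ (q : Q) (n : N), π (q • n) = q * π n * q⁻¹) :
    (∀ g h : (A × N) ⋊[prodMulAut ρ] R,
      mapOne π ρ (g * h) = mapOne π ρ g * mapOne π ρ h) ∧
    (∀ g h : (N × N) ⋊[diagMulAut] Q,
      mapTwo π (g * h) = mapTwo π g * mapTwo π h) ∧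
    (∃ Ξ : Subgroup (((A × N) ⋊[prodMulAut ρ] R) × ((N × N) ⋊[diagMulAut] Q)),
      (Ξ : Set (((A × N) ⋊[prodMulAut ρ] R) × ((N × N) ⋊[diagMulAut] Q))) =
        {w | mapOne π ρ w.1 = mapTwo π w.2}) ∧
    (∀ u v : ((A × N) ⋊[prodMulAut ρ] R) × ((N × N) ⋊[diagMulAut] Q),
      mapOne π ρ u.1 = mapTwo π u.2 → mapOne π ρ v.1 = mapTwo π v.2 →
      xiMap ρ (u * v) = xiMap ρ u * xiMap ρ v) := by
  have hmul1 : ∀ g h : (A × N) ⋊[prodMulAut ρ] R,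
      mapOne π ρ (g * h) = mapOne π ρ g * mapOne π ρ h := by
    intro g h
    simp only [mapOne]
    rw [SemidirectProduct.mul_left, SemidirectProduct.mul_right]
    simp only [mapOne, SemidirectProduct.mul_left, SemidirectProduct.mul_right,
      prodMulAut, MonoidHom.coe_mk, OneHom.coe_mk, MulEquiv.coe_mk, Equiv.coe_fn_mk,
      Prod.snd_mul, map_mul, hequiv]
    group
  have hmul2 : ∀ g h : (N × N) ⋊[diagMulAut] Q,
      mapTwo π (g * h) = mapTwo π g * mapTwo π h := by
    intro g h
    simp only [mapTwo]
    rw [SemidirectProduct.mul_left, SemidirectProduct.mul_right]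
    simp only [mapTwo, SemidirectProduct.mul_left, SemidirectProduct.mul_right,
      diagMulAut, MonoidHom.coe_mk, OneHom.coe_mk, MulEquiv.coe_mk, Equiv.coe_fn_mk,
      Prod.fst_mul, map_mul, hequiv]
    group
  have hone1 : mapOne π ρ (1 : (A × N) ⋊[prodMulAut ρ] R) = 1 := by
    simp [mapOne]
  have hone2 : mapTwo π (1 : (N × N) ⋊[diagMulAut] Q) = 1 := by
    simp [mapTwo]
  have hinv1 : ∀ g : (A × N) ⋊[prodMulAut ρ] R, mapOne π ρ g⁻¹ = (mapOne π ρ g)⁻¹ := by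
    intro g
    have := hmul1 g g⁻¹
    rw [mul_inv_cancel, hone1] at this
    exact eq_inv_of_mul_eq_one_right this.symm
  have hinv2 : ∀ g : (N × N) ⋊[diagMulAut] Q, mapTwo π g⁻¹ = (mapTwo π g)⁻¹ := by
    intro g
    have := hmul2 g g⁻¹
    rw [mul_inv_cancel, hone2] at this
    exact eq_inv_of_mul_eq_one_right this.symm
  refine ⟨hmul1, hmul2, ⟨⟨⟨⟨{w | mapOne π ρ w.1 = mapTwo π w.2}, ?_⟩, ?_⟩, ?_⟩, rfl⟩, ?_⟩
  · rintro a b ha hb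
    simp only [Set.mem_setOf_eq, Prod.fst_mul, Prod.snd_mul, hmul1, hmul2] at *
    rw [ha, hb]
  · simp [Set.mem_setOf_eq, hone1, hone2]
  · rintro a ha
    simp only [Set.mem_setOf_eq, Prod.fst_inv, Prod.snd_inv, hinv1, hinv2] at *
    rw [ha]
  · rintro ⟨⟨⟨a, n⟩, r⟩, ⟨⟨x, y⟩, z⟩⟩ ⟨⟨⟨a', n'⟩, r'⟩, ⟨⟨x', y'⟩, z'⟩⟩ hu hv
    simp only [mapOne, mapTwo] at hu
    -- hu : π n * ρ r = π x * z
    have key : ∀ w : N, ρ r • w = n⁻¹ * (x * (z • w) * x⁻¹) * n := by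
      intro w
      have h1 : ρ r = (π n)⁻¹ * (π x * z) := by
        rw [← hu]; group
      rw [h1, mul_smul, mul_smul, ← map_inv π, hconj, hconj]
      group
    simp only [xiMap, Prod.fst_mul, Prod.snd_mul, SemidirectProduct.mul_left,
      SemidirectProduct.mul_right, prodMulAut, diagMulAut, MonoidHom.coe_mk, OneHom.coe_mk,
      MulEquiv.coe_mk, Equiv.coe_fn_mk, Prod.fst_mul, Prod.snd_mul]
    ext <;> simp only [SemidirectProduct.mul_left, SemidirectProduct.mul_right, prodMulAut,
      MonoidHom.coe_mk, OneHom.coe_mk, MulEquiv.coe_mk, Equiv.coe_fn_mk, Prod.fst_mul,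
      Prod.snd_mul] <;> try rfl
    -- remaining: second component of the A × N part
    show y * z • y' * (x * z • x')⁻¹ * (n * ρ r • n') =
      y * x⁻¹ * n * ρ r • (y' * x'⁻¹ * n')
    simp only [key, smul_mul', smul_inv', mul_inv_rev]
    group

end
end
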